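/- arXiv:2008.06750 — 10 statements merged into one kernel-verified Lean document; each statement's English description precedes it below -/
import Mathlib

section
/- The two-variable Laguerre polynomial is symmetric under simultaneous exchange of indices and variables: L_{n,m}(x,y) = L_{m,n}(y,x) for all nonnegative integers n, m and real x, y. -/
noncomputable def L2 (n m : ℕ) (x y : ℝ) : ℝ :=
  ∑ i ∈ Finset.range (m+1), ∑ s ∈ Finset.range (n+1),
    ((-1:ℝ)^(i+s) / ((Nat.factorial i) * (Nat.factorial s))) *
      ((m+n).choose (m-i)) * ((n+i).choose (n-s)) * x^s * y^i

/-!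
After exchanging the order of summation, the two sides agree term by term: with
`a = m - i`, `b = n - s`, `c = i + s`, both products of binomial coefficients equal the
trinomial coefficient `(a + b + c)! / (a! b! c!)`.
-/

theorem Nat.choose_mul_choose_add_comm (a b c : ℕ) :
    (a + b + c).choose a * (b + c).choose b = (a + b + c).choose b * (a + c).choose a := by
  rw [Nat.choose_symm_of_eq_add (Nat.add_assoc a b c), Nat.choose_mul (Nat.le_add_right b c),
    Nat.choose_symm_add (a := a) (b := c), show a + b + c - b = a + c by omega,
    Nat.add_sub_cancel_left]

theorem Nat.choose_mul_choose_swap {m n i s : ℕ} (hi : i ≤ m) (hs : s ≤ n) :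
    (m + n).choose (m - i) * (n + i).choose (n - s) =
      (n + m).choose (n - s) * (m + s).choose (m - i) := by
  have h := Nat.choose_mul_choose_add_comm (m - i) (n - s) (i + s)
  rw [show m - i + (n - s) + (i + s) = m + n by omega, show n - s + (i + s) = n + i by omega,
    show m - i + (i + s) = m + s by omega] at h
  rwa [Nat.add_comm n m]

theorem stmt1 (n m : ℕ) (x y : ℝ) : L2 n m x y = L2 m n y x := by
  unfold L2
  rw [Finset.sum_comm]
  refine Finset.sum_congr rfl fun s hs => Finset.sum_congr rfl fun i hi => ?_
  have hchoose : ((m + n).choose (m - i) * (n + i).choose (n - s) : ℝ) =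
      (n + m).choose (n - s) * (m + s).choose (m - i) :=
    mod_cast Nat.choose_mul_choose_swap (Nat.lt_succ_iff.mp (Finset.mem_range.mp hi))
      (Nat.lt_succ_iff.mp (Finset.mem_range.mp hs))
  rw [Nat.add_comm s i, mul_assoc ((-1 : ℝ) ^ (i + s) / _), hchoose]
  ring
end

section
/- For all nonnegative integers n, m and indices 0 ≤ s ≤ n, 0 ≤ i ≤ m, the coefficient identity ((-1)^{i+s} / (i! · s!)) · C(m+n, m-i) · C(n+i, n-s) = C(n+m, n) · ((-n)_s · (-m)_i / (s+i)!) · (1/(s! · i!)) holds, where (a)_k denotes the Pochhammer symbol (rising factorial). -/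
/-!
Since `(-n)_s = (-1)^s n!/(n-s)!`, after expanding the three binomial coefficients both sides
equal `(-1)^(i+s) (m+n)! / (i! s! (m-i)! (n-s)! (s+i)!)`.
-/

/-- Pochhammer symbol (rising factorial) on the reals. -/
noncomputable def poch (a : ℝ) (k : ℕ) : ℝ := ∏ i ∈ Finset.range k, (a + i)

open Nat Polynomial

theorem poch_eq_ascPochhammer_eval (a : ℝ) (k : ℕ) : poch a k = (ascPochhammer ℝ k).eval a := by
  induction k with
  | zero => simp [poch]
  | succ k ih => rw [poch, Finset.prod_range_succ, ← poch, ih, ascPochhammer_succ_eval]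

theorem poch_neg_natCast (n s : ℕ) : poch (-(n : ℝ)) s = (-1) ^ s * n.descFactorial s := by
  rw [poch_eq_ascPochhammer_eval, ascPochhammer_eval_neg_eq_descPochhammer,
    descPochhammer_eval_eq_descFactorial]

theorem cast_factorial_eq_mul_descFactorial (R : Type*) [Semiring R] {n s : ℕ} (hs : s ≤ n) :
    (n ! : R) = (n - s)! * n.descFactorial s := by
  rw [← cast_mul, factorial_mul_descFactorial hs]

theorem stmt2 (n m s i : ℕ) (hs : s ≤ n) (hi : i ≤ m) :
    ((-1:ℝ)^(i+s) / ((Nat.factorial i) * (Nat.factorial s))) *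
      ((m+n).choose (m-i)) * ((n+i).choose (n-s)) =
    ((n+m).choose n : ℝ) * (poch (-(n:ℝ)) s * poch (-(m:ℝ)) i / (Nat.factorial (s+i))) *
      (1 / ((Nat.factorial s) * (Nat.factorial i))) := by
  rw [cast_choose ℝ (show m - i ≤ m + n by omega), cast_choose ℝ (show n - s ≤ n + i by omega),
    cast_choose ℝ (show n ≤ n + m by omega), poch_neg_natCast, poch_neg_natCast,
    show m + n - (m - i) = n + i by omega, show n + i - (n - s) = s + i by omega,
    Nat.add_sub_cancel_left, add_comm m n, cast_factorial_eq_mul_descFactorial ℝ hs,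
    cast_factorial_eq_mul_descFactorial ℝ hi]
  have hsn : (n.descFactorial s : ℝ) ≠ 0 := by exact_mod_cast (descFactorial_pos.mpr hs).ne'
  have him : (m.descFactorial i : ℝ) ≠ 0 := by exact_mod_cast (descFactorial_pos.mpr hi).ne'
  field_simp
  ring
end

section
/- For all real x, y and all nonnegative integers n, m, the 6-term recurrence (n+1)·L_{n+1,m+1}(x,y) = 2(n+1)·L_{n+1,m}(x,y) + (2n+1-x)·L_{n,m+1}(x,y) - (n+1)·L_{n+1,m-1}(x,y) - (2n+1-x+y)·L_{n,m}(x,y) - n·L_{n-1,m+1}(x,y) holds, where L_{a,b}(x,y) := 0 whenever a < 0 or b < 0. -/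
noncomputable def L2Z (n m : ℤ) (x y : ℝ) : ℝ :=
  if n < 0 ∨ m < 0 then 0 else L2 n.toNat m.toNat x y

/-!
Write `L_{n,m}(x, y) = ∑ C(m+n, n+i) C(n+i, i+s) · (-x)^s/s! · (-y)^i/i!`. In these divided
powers, multiplication by `x` (resp. `y`) shifts `s` (resp. `i`) by one at the cost of a factor
`-s` (resp. `-i`), so the recurrence becomes an identity between products of two binomial
coefficients. Pascal's rule in the total degree `m + n` splits off the first factor, and what
remains is an identity for `C(n+i+1, i+s)` that follows from Pascal's rule and absorption.
-/

open Finset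
open scoped Nat

noncomputable def divPowSum (K : ℕ) (b : ℕ → ℕ → ℝ) (x y : ℝ) : ℝ :=
  ∑ i ∈ range K, ∑ s ∈ range K, b i s * ((-x) ^ s / s !) * ((-y) ^ i / i !)

theorem divPowSum_comm (K : ℕ) (b : ℕ → ℕ → ℝ) (x y : ℝ) :
    divPowSum K b x y = divPowSum K (fun i s => b s i) y x := by
  unfold divPowSum
  rw [sum_comm]
  exact sum_congr rfl fun _ _ => sum_congr rfl fun _ _ => by ring

theorem mul_sum_range_divPow (K : ℕ) (c : ℕ → ℝ) (hc : c K = 0) (x : ℝ) :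
    x * ∑ s ∈ range (K + 1), c s * ((-x) ^ s / s !) =
      -∑ s ∈ range (K + 1), s * c (s - 1) * ((-x) ^ s / s !) := by
  rw [sum_range_succ, hc, sum_range_succ']
  simp only [zero_mul, add_zero, Nat.cast_zero, mul_sum, ← sum_neg_distrib]
  refine sum_congr rfl fun s _ => ?_
  rw [Nat.factorial_succ, Nat.add_sub_cancel]
  push_cast
  field_simp
  ring

theorem x_mul_divPowSum (K : ℕ) (b : ℕ → ℕ → ℝ) (hb : ∀ i, b i K = 0) (x y : ℝ) :
    x * divPowSum (K + 1) b x y = -divPowSum (K + 1) (fun i s => s * b i (s - 1)) x y := by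
  unfold divPowSum
  simp only [← sum_mul, mul_sum, ← sum_neg_distrib]
  refine sum_congr rfl fun i _ => ?_
  rw [← mul_assoc, mul_sum_range_divPow K (b i) (hb i), neg_mul]

theorem y_mul_divPowSum (K : ℕ) (b : ℕ → ℕ → ℝ) (hb : ∀ s, b K s = 0) (x y : ℝ) :
    y * divPowSum (K + 1) b x y = -divPowSum (K + 1) (fun i s => i * b (i - 1) s) x y := by
  rw [divPowSum_comm, x_mul_divPowSum K _ hb, divPowSum_comm]

/-- Indexed by the total degree `a = m + n`, so that `L2Coeff a c` with `a < c` vanishes and also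
describes `L2Z` at `m < 0`. -/
noncomputable def L2Coeff (a c i s : ℕ) : ℝ :=
  a.choose (c + i) * (c + i).choose (i + s)

theorem L2Coeff_eq_zero_of_lt_add {a c i : ℕ} (s : ℕ) (h : a < c + i) :
    L2Coeff a c i s = 0 := by
  simp [L2Coeff, Nat.choose_eq_zero_of_lt h]

theorem L2Coeff_eq_zero_of_lt {c s : ℕ} (a i : ℕ) (h : c < s) : L2Coeff a c i s = 0 := by
  simp [L2Coeff, Nat.choose_eq_zero_of_lt (by omega : c + i < i + s)]

theorem L2_eq_divPowSum (n m K : ℕ) (hn : n < K) (hm : m < K) (x y : ℝ) :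
    L2 n m x y = divPowSum K (L2Coeff (m + n) n) x y := by
  unfold divPowSum
  rw [eventually_constant_sum (N := m + 1) (fun i hi => sum_eq_zero fun s _ => by
    rw [L2Coeff_eq_zero_of_lt_add s (by omega), zero_mul, zero_mul]) hm]
  refine sum_congr rfl fun i hi => ?_
  rw [eventually_constant_sum (N := n + 1) (fun s hs => by
    rw [L2Coeff_eq_zero_of_lt _ _ (by omega), zero_mul, zero_mul]) hn]
  refine sum_congr rfl fun s hs => ?_
  rw [mem_range] at hi hs
  rw [L2Coeff, Nat.choose_symm_of_eq_add (by omega : m + n = (m - i) + (n + i)),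
    Nat.choose_symm_of_eq_add (by omega : n + i = (n - s) + (i + s)), neg_pow x, neg_pow y]
  ring

theorem L2Z_eq_divPowSum {n m : ℤ} (a c K : ℕ) (hc : n = c) (ha : n + m = a) (hn : n < K)
    (hm : m < K) (x y : ℝ) : L2Z n m x y = divPowSum K (L2Coeff a c) x y := by
  unfold L2Z
  split_ifs with h
  · refine (sum_eq_zero fun i _ => sum_eq_zero fun s _ => ?_).symm
    rw [L2Coeff_eq_zero_of_lt_add s (by omega), zero_mul, zero_mul]
  · lift m to ℕ using by omega
    subst hc
    rw [Int.toNat_natCast, Int.toNat_natCast, L2_eq_divPowSum c m K (by omega) (by omega)]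
    congr
    omega

theorem cast_succ_sub_mul_choose_succ (w t : ℕ) :
    ((w : ℝ) + 1 - t) * (w + 1).choose t = (w + 1) * w.choose t := by
  rcases le_or_gt t (w + 1) with h | h
  · have := congrArg (Nat.cast (R := ℝ)) (Nat.choose_mul_succ_eq w t)
    push_cast [Nat.cast_sub h] at this
    linarith
  · simp [Nat.choose_eq_zero_of_lt h, Nat.choose_eq_zero_of_lt (by omega : w < t)]

theorem cast_choose_recurrence (n i s : ℕ) :
    ((n : ℝ) + 1) * (n + 1 + i).choose (i + s) =
      (2 * n + 1) * (n + i).choose (i + s) + s * (n + i).choose (i + (s - 1))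
      + i * (n + (i - 1)).choose (i - 1 + s) - n * (n - 1 + i).choose (i + s) := by
  have hs : (s : ℝ) * (n + i).choose (i + (s - 1)) = s * (n + i).choose (i + s - 1) := by
    rcases s with _ | s <;> simp [← add_assoc]
  have hi : (i : ℝ) * (n + (i - 1)).choose (i - 1 + s) = i * (n + i - 1).choose (i + s - 1) := by
    rcases i with _ | i <;> simp [← add_assoc, add_right_comm _ 1 s]
  have hn : (n : ℝ) * (n - 1 + i).choose (i + s) = n * (n + i - 1).choose (i + s) := by
    rcases n with _ | n <;> simp [add_right_comm _ 1 i]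
  rw [hs, hi, hn, add_right_comm n 1 i]
  rcases i with _ | i
  · rcases n with _ | n
    · rcases s with _ | _ | s <;> simp [Nat.choose_succ_succ]
    · rcases s with _ | s
      · simp only [Nat.cast_add, Nat.cast_one, add_zero, Nat.choose_zero_right, mul_one,
          CharP.cast_eq_zero, zero_tsub, add_tsub_cancel_right, add_sub_add_right_eq_sub]
        ring
      · simp only [Nat.choose_succ_succ, add_zero, Nat.add_sub_cancel, zero_add]
        push_cast
        linear_combination cast_succ_sub_mul_choose_succ n s
  · rw [show n + (i + 1) - 1 = n + i by omega, show i + 1 + s - 1 = i + s by omega,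
      show i + 1 + s = i + s + 1 by omega, show n + (i + 1) = n + i + 1 by omega]
    simp only [Nat.choose_succ_succ]
    push_cast
    linear_combination (norm := (push_cast; ring)) cast_succ_sub_mul_choose_succ (n + i) (i + s)

theorem L2Coeff_recurrence (a n i s : ℕ) :
    ((n : ℝ) + 1) * L2Coeff (a + 2) (n + 1) i s =
      2 * (n + 1) * L2Coeff (a + 1) (n + 1) i s + (2 * n + 1) * L2Coeff (a + 1) n i s
      + s * L2Coeff (a + 1) n i (s - 1) - (n + 1) * L2Coeff a (n + 1) i s
      - (2 * n + 1) * L2Coeff a n i s - s * L2Coeff a n i (s - 1)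
      + i * L2Coeff a n (i - 1) s - n * L2Coeff a (n - 1) i s := by
  have pascal (b : ℕ) :
      ((b + 1).choose (n + 1 + i) : ℝ) = b.choose (n + i) + b.choose (n + 1 + i) := by
    rw [add_right_comm, Nat.choose_succ_succ', Nat.cast_add]
  have hi :
      (i : ℝ) * a.choose (n + (i - 1)) = i * ((a + 1).choose (n + i) - a.choose (n + i)) := by
    rcases i with _ | i
    · simp
    · rw [Nat.add_sub_cancel, ← add_assoc, Nat.choose_succ_succ']
      push_cast
      ring
  have hn : (n : ℝ) * a.choose (n - 1 + i) = n * ((a + 1).choose (n + i) - a.choose (n + i)) := by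
    rcases n with _ | n
    · simp
    · rw [Nat.add_sub_cancel, add_right_comm, Nat.choose_succ_succ']
      push_cast
      ring
  unfold L2Coeff
  linear_combination
    (((a + 1).choose (n + i) : ℝ) - a.choose (n + i)) * cast_choose_recurrence n i s
    + (n + 1) * ((n + 1 + i).choose (i + s) : ℝ) * (pascal (a + 1) - pascal a)
    - ((n + (i - 1)).choose (i - 1 + s) : ℝ) * hi + ((n - 1 + i).choose (i + s) : ℝ) * hn

theorem divPowSum_L2Coeff_recurrence (a n K : ℕ) (hn : n < K) (ha : a < n + K) (x y : ℝ) :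
    ((n : ℝ) + 1) * divPowSum (K + 1) (L2Coeff (a + 2) (n + 1)) x y =
      2 * (n + 1) * divPowSum (K + 1) (L2Coeff (a + 1) (n + 1)) x y
      + (2 * n + 1 - x) * divPowSum (K + 1) (L2Coeff (a + 1) n) x y
      - (n + 1) * divPowSum (K + 1) (L2Coeff a (n + 1)) x y
      - (2 * n + 1 - x + y) * divPowSum (K + 1) (L2Coeff a n) x y
      - n * divPowSum (K + 1) (L2Coeff a (n - 1)) x y := by
  have hx₁ := x_mul_divPowSum K (L2Coeff (a + 1) n) (fun i => L2Coeff_eq_zero_of_lt _ i hn) x y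
  have hx₀ := x_mul_divPowSum K (L2Coeff a n) (fun i => L2Coeff_eq_zero_of_lt _ i hn) x y
  have hy₀ := y_mul_divPowSum K (L2Coeff a n) (fun s => L2Coeff_eq_zero_of_lt_add s ha) x y
  have hcoeff : ((n : ℝ) + 1) * divPowSum (K + 1) (L2Coeff (a + 2) (n + 1)) x y =
      2 * (n + 1) * divPowSum (K + 1) (L2Coeff (a + 1) (n + 1)) x y
      + (2 * n + 1) * divPowSum (K + 1) (L2Coeff (a + 1) n) x y
      + divPowSum (K + 1) (fun i s => s * L2Coeff (a + 1) n i (s - 1)) x y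
      - (n + 1) * divPowSum (K + 1) (L2Coeff a (n + 1)) x y
      - (2 * n + 1) * divPowSum (K + 1) (L2Coeff a n) x y
      - divPowSum (K + 1) (fun i s => s * L2Coeff a n i (s - 1)) x y
      + divPowSum (K + 1) (fun i s => i * L2Coeff a n (i - 1) s) x y
      - n * divPowSum (K + 1) (L2Coeff a (n - 1)) x y := by
    unfold divPowSum
    simp only [mul_sum, ← sum_add_distrib, ← sum_sub_distrib]
    refine sum_congr rfl fun i _ => sum_congr rfl fun s _ => ?_
    linear_combination ((-x) ^ s / s ! * ((-y) ^ i / i !)) * L2Coeff_recurrence a n i s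
  linear_combination hcoeff + hx₁ - hx₀ + hy₀

theorem stmt5 (x y : ℝ) (n m : ℕ) :
    ((n:ℝ)+1) * L2Z (n+1) (m+1) x y =
      2*((n:ℝ)+1) * L2Z (n+1) m x y + (2*(n:ℝ)+1-x) * L2Z n (m+1) x y
      - ((n:ℝ)+1) * L2Z (n+1) ((m:ℤ)-1) x y
      - (2*(n:ℝ)+1-x+y) * L2Z n m x y - (n:ℝ) * L2Z ((n:ℤ)-1) (m+1) x y := by
  have hpred : (n : ℝ) * L2Z ((n : ℤ) - 1) (m + 1) x y =
      n * divPowSum (m + n + 3) (L2Coeff (m + n) (n - 1)) x y := by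
    rcases Nat.eq_zero_or_pos n with rfl | hn
    · simp -- `n - 1` truncates to `0` here, but the factor `n` vanishes
    · rw [L2Z_eq_divPowSum (m + n) (n - 1) (m + n + 3)] <;> omega
  rw [L2Z_eq_divPowSum (m + n + 2) (n + 1) (m + n + 3),
    L2Z_eq_divPowSum (m + n + 1) (n + 1) (m + n + 3), L2Z_eq_divPowSum (m + n + 1) n (m + n + 3),
    L2Z_eq_divPowSum (m + n) (n + 1) (m + n + 3), L2Z_eq_divPowSum (m + n) n (m + n + 3), hpred]
  · exact divPowSum_L2Coeff_recurrence (m + n) n (m + n + 2) (by omega) (by omega) x y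
  all_goals omega
end

section
/- For every nonnegative integer n, all real x, y, and all real t with |t| < 1, the identity ∑_{m=0}^{∞} L_{n,m}(x,y) · t^m = (e^{-ty/(1-t)} / (1-t)^{n+1}) · L_n(x + ty/(1-t)) holds, where L_n is the classical Laguerre polynomial and the series converges. -/
noncomputable def Lag (n α : ℕ) (x : ℝ) : ℝ :=
  ∑ j ∈ Finset.range (n+1), ((-1:ℝ)^j / (Nat.factorial j)) * ((n+α).choose (n-j)) * x^j

/-!
Summing over `m` first, `∑ₘ C(m+n, m-i) tᵐ = tⁱ / (1-t)^(n+i+1)`, and grouping `L_{n,m}(x,y)` by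
powers of `y` exhibits the generalized Laguerre polynomials `L_n^{(i)}(x) = Lag n i x`. The series
thus becomes `(1-t)^{-(n+1)} ∑ᵢ zⁱ/i! · L_n^{(i)}(x)` with `z = -ty/(1-t)`, and the classical
identity `∑ᵢ zⁱ/i! · L_n^{(i)}(x) = e^z L_n(x - z)` follows from Vandermonde's identity
`C(n+i, n-s) = ∑_b C(i,b) C(n, n-s-b)` and `∑ᵢ C(i,b) zⁱ/i! = z^b/b! · e^z`. The bound
`|L_n^{(i)}(x)| ≤ 2^(n+i) ∑_{j ≤ n} |x|ʲ/j!` gives the absolute convergence that justifies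
the rearrangement.
-/

open Finset
open scoped Nat

theorem HasSum.sum_antidiagonal {α : Type*} [AddCommMonoid α] [TopologicalSpace α]
    [ContinuousAdd α] [RegularSpace α] {f : ℕ × ℕ → α} {a : α} (h : HasSum f a) :
    HasSum (fun m ↦ ∑ p ∈ antidiagonal m, f p) a := by
  refine (HasAntidiagonal.sigmaAntidiagonalEquivProd.hasSum_iff.mpr h).sigma fun m ↦ ?_
  exact sum_coe_sort (antidiagonal m) f ▸ hasSum_fintype _

theorem hasSum_sum_choose_mul_pow {𝕜 : Type*} [NormedField 𝕜] [CompleteSpace 𝕜] (n : ℕ)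
    {a : ℕ → 𝕜} {t S : 𝕜} (ht : ‖t‖ < 1)
    (ha : Summable fun i ↦ ‖a i‖ * (‖t‖ / (1 - ‖t‖)) ^ i)
    (hS : HasSum (fun i ↦ a i * (t / (1 - t)) ^ i) S) :
    HasSum (fun m ↦ (∑ i ∈ range (m + 1), ((m + n).choose (m - i) : 𝕜) * a i) * t ^ m)
      (S / (1 - t) ^ (n + 1)) := by
  -- `F (i, k) = a i * C(n+i+k, k) * t^(i+k)`: its rows sum to `a i * tⁱ / (1-t)^(n+i+1)`,
  -- its antidiagonals `i + k = m` to the `m`-th term of the left-hand side.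
  set F : ℕ × ℕ → 𝕜 := fun p ↦
    a p.1 * t ^ p.1 * ((p.2 + (n + p.1)).choose (n + p.1) * t ^ p.2)
  have hrow (i : ℕ) : HasSum (fun k ↦ F (i, k)) (a i * t ^ i * (1 / (1 - t) ^ (n + i + 1))) :=
    (hasSum_choose_mul_geometric_of_norm_lt_one (n + i) ht).mul_left _
  have hF : Summable F := by
    refine Summable.of_norm_bounded (g := fun p ↦ ‖a p.1‖ * ‖t‖ ^ p.1 *
      ((p.2 + (n + p.1)).choose (n + p.1) * ‖t‖ ^ p.2)) ?_ fun p ↦ ?_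
    · have hrow' (i : ℕ) := (hasSum_choose_mul_geometric_of_norm_lt_one (n + i)
        (r := ‖t‖) (by simpa using ht)).mul_left (‖a i‖ * ‖t‖ ^ i)
      refine (summable_prod_of_nonneg fun _ ↦ by positivity).mpr
        ⟨fun i ↦ (hrow' i).summable, ?_⟩
      simp only [fun i ↦ (hrow' i).tsum_eq]
      refine (ha.div_const ((1 - ‖t‖) ^ (n + 1))).congr fun i ↦ ?_
      rw [div_pow]
      field_simp
      ring
    · simp only [F, norm_mul, norm_pow]
      gcongr
      simpa using Nat.norm_cast_le (α := 𝕜) _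
  have hrows : HasSum (fun i ↦ a i * t ^ i * (1 / (1 - t) ^ (n + i + 1)))
      (S / (1 - t) ^ (n + 1)) := by
    convert hS.div_const ((1 - t) ^ (n + 1)) using 2 with i
    rw [div_pow]
    field_simp
    ring
  have hFS : HasSum F (S / (1 - t) ^ (n + 1)) :=
    (hF.hasSum.prod_fiberwise hrow).unique hrows ▸ hF.hasSum
  convert hFS.sum_antidiagonal using 2 with m
  rw [Nat.sum_antidiagonal_eq_sum_range_succ_mk, sum_mul]
  refine sum_congr rfl fun i hi ↦ ?_
  have him : i ≤ m := Nat.lt_succ_iff.mp (mem_range.mp hi)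
  rw [Nat.choose_symm_of_eq_add (show m + n = m - i + (n + i) by omega)]
  simp only [F, show m - i + (n + i) = m + n by omega]
  rw [← pow_sub_mul_pow t him]
  ring

theorem add_pow_div_factorial {K : Type*} [Field K] [CharZero K] (a b : K) (k : ℕ) :
    (a + b) ^ k / k ! = ∑ j ∈ range (k + 1), a ^ j / j ! * (b ^ (k - j) / (k - j)!) := by
  rw [add_pow, sum_div]
  refine sum_congr rfl fun j hj ↦ ?_
  rw [Nat.cast_choose K (Nat.lt_succ_iff.mp (mem_range.mp hj))]
  have : (k ! : K) ≠ 0 := Nat.cast_ne_zero.mpr k.factorial_ne_zero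
  field_simp

theorem Real.hasSum_choose_mul_pow_div_factorial (j : ℕ) (z : ℝ) :
    HasSum (fun i ↦ (i.choose j : ℝ) * (z ^ i / i !)) (z ^ j / j ! * Real.exp z) := by
  have hshift : HasSum (fun i ↦ ((i + j).choose j : ℝ) * (z ^ (i + j) / (i + j)!))
      (z ^ j / j ! * Real.exp z) := by
    rw [Real.exp_eq_exp_ℝ]
    refine ((NormedSpace.expSeries_div_hasSum_exp z).mul_left (z ^ j / j !)).congr_fun
      fun i ↦ ?_
    rw [Nat.cast_choose ℝ (Nat.le_add_left j i), Nat.add_sub_cancel, pow_add]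
    field_simp
  refine (hasSum_nat_add_iff' j).mp ?_
  rwa [sum_eq_zero fun i hi ↦ by simp [Nat.choose_eq_zero_of_lt (mem_range.mp hi)], sub_zero]

theorem Real.hasSum_choose_add_mul_pow_div_factorial (n r : ℕ) (z : ℝ) :
    HasSum (fun i ↦ ((n + i).choose r : ℝ) * (z ^ i / i !))
      (Real.exp z * ∑ b ∈ range (r + 1), (n.choose (r - b) : ℝ) * (z ^ b / b !)) := by
  have hvandermonde (i : ℕ) :
      (n + i).choose r = ∑ b ∈ range (r + 1), i.choose b * n.choose (r - b) := by
    rw [add_comm, Nat.add_choose_eq, Nat.sum_antidiagonal_eq_sum_range_succ_mk]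
  simp only [hvandermonde, Nat.cast_sum, Nat.cast_mul, sum_mul, mul_sum]
  refine hasSum_sum fun b _ ↦ ?_
  rw [show ∀ c w : ℝ, Real.exp z * (c * w) = c * (w * Real.exp z) from fun _ _ ↦ by ring]
  exact ((Real.hasSum_choose_mul_pow_div_factorial b z).mul_left _).congr_fun fun i ↦ by ring

theorem sum_choose_mul_pow_div_factorial_eq_Lag (n : ℕ) (x z : ℝ) :
    ∑ s ∈ range (n + 1), (-x) ^ s / s ! *
      ∑ b ∈ range (n - s + 1), (n.choose (n - s - b) : ℝ) * (z ^ b / b !) =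
      Lag n 0 (x - z) := by
  set f : ℕ → ℕ → ℝ := fun s b ↦
    (-x) ^ s / s ! * ((n.choose (n - s - b) : ℝ) * (z ^ b / b !))
  calc _ = ∑ s ∈ range (n + 1), ∑ b ∈ range (n + 1 - s), f s b := by
        refine sum_congr rfl fun s hs ↦ ?_
        rw [mul_sum, show n + 1 - s = n - s + 1 by have := mem_range.mp hs; omega]
    _ = ∑ k ∈ range (n + 1), ∑ j ∈ range (k + 1), f j (k - j) :=
        (sum_range_diag_flip _ _).symm
    _ = Lag n 0 (x - z) := by
        refine sum_congr rfl fun k _ ↦ ?_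
        have hsign : (-1 : ℝ) ^ k * (x - z) ^ k = (-x + z) ^ k := by
          rw [← mul_pow]; ring_nf
        rw [add_zero, show (-1 : ℝ) ^ k / k ! * n.choose (n - k) * (x - z) ^ k
            = n.choose (n - k) * ((-x + z) ^ k / k !) by rw [← hsign]; ring,
          add_pow_div_factorial, mul_sum]
        refine sum_congr rfl fun j hj ↦ ?_
        simp only [f, show n - j - (k - j) = n - k by have := mem_range.mp hj; omega]
        ring

theorem Real.hasSum_pow_div_factorial_mul_Lag (n : ℕ) (x z : ℝ) :
    HasSum (fun i ↦ z ^ i / i ! * Lag n i x) (Real.exp z * Lag n 0 (x - z)) := by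
  have h := hasSum_sum fun s (_ : s ∈ range (n + 1)) ↦
    (Real.hasSum_choose_add_mul_pow_div_factorial n (n - s) z).mul_left ((-x) ^ s / s !)
  rw [← sum_choose_mul_pow_div_factorial_eq_Lag, mul_sum]
  simp only [mul_left_comm (Real.exp z)]
  refine h.congr_fun fun i ↦ ?_
  simp only [Lag, mul_sum]
  refine sum_congr rfl fun s _ ↦ ?_
  rw [neg_pow]
  ring

theorem L2_eq_sum_choose_mul_Lag (n m : ℕ) (x y : ℝ) :
    L2 n m x y =
      ∑ i ∈ range (m + 1), ((m + n).choose (m - i) : ℝ) * ((-y) ^ i / i ! * Lag n i x) := by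
  refine sum_congr rfl fun i _ ↦ ?_
  simp only [Lag, mul_sum]
  refine sum_congr rfl fun s _ ↦ ?_
  rw [pow_add, neg_pow]
  ring

theorem abs_Lag_le (n α : ℕ) (x : ℝ) :
    |Lag n α x| ≤ 2 ^ (n + α) * ∑ j ∈ range (n + 1), |x| ^ j / j ! := by
  rw [mul_sum]
  refine (abs_sum_le_sum_abs _ _).trans (sum_le_sum fun j _ ↦ ?_)
  rw [abs_mul, abs_mul, abs_div, abs_pow, abs_pow, abs_neg, abs_one, one_pow, Nat.abs_cast,
    Nat.abs_cast]
  have hchoose : ((n + α).choose (n - j) : ℝ) ≤ 2 ^ (n + α) := by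
    exact_mod_cast Nat.choose_le_two_pow _ _
  calc 1 / (j ! : ℝ) * ((n + α).choose (n - j)) * |x| ^ j
      ≤ 1 / j ! * 2 ^ (n + α) * |x| ^ j := by gcongr
    _ = 2 ^ (n + α) * (|x| ^ j / j !) := by ring

theorem summable_norm_pow_div_factorial_mul_Lag_mul_pow (n : ℕ) (x y : ℝ) {r : ℝ}
    (hr : 0 ≤ r) :
    Summable fun i ↦ ‖y ^ i / i ! * Lag n i x‖ * r ^ i := by
  set M := 2 ^ n * ∑ j ∈ range (n + 1), |x| ^ j / (j ! : ℝ)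
  refine Summable.of_nonneg_of_le (fun _ ↦ by positivity) (fun i ↦ ?_)
    ((Real.summable_pow_div_factorial (2 * |y| * r)).mul_left M)
  rw [Real.norm_eq_abs, abs_mul, abs_div, abs_pow, Nat.abs_cast]
  calc |y| ^ i / i ! * |Lag n i x| * r ^ i
      ≤ |y| ^ i / i ! * (2 ^ (n + i) * ∑ j ∈ range (n + 1), |x| ^ j / j !) * r ^ i := by
        gcongr; exact abs_Lag_le n i x
    _ = M * ((2 * |y| * r) ^ i / i !) := by ring

theorem stmt9 (n : ℕ) (x y t : ℝ) (ht : |t| < 1) :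
    HasSum (fun m : ℕ => L2 n m x y * t^m)
      (Real.exp (-t*y/(1-t)) / (1-t)^(n+1) * Lag n 0 (x + t*y/(1-t))) := by
  have hLag : HasSum (fun i ↦ (-y) ^ i / i ! * Lag n i x * (t / (1 - t)) ^ i)
      (Real.exp (-t * y / (1 - t)) * Lag n 0 (x + t * y / (1 - t))) := by
    convert Real.hasSum_pow_div_factorial_mul_Lag n x (-t * y / (1 - t)) using 1
    · ext i
      rw [show -t * y / (1 - t) = -y * (t / (1 - t)) by ring, mul_pow]
      ring
    · congr 2
      ring
  have h := hasSum_sum_choose_mul_pow n (by rwa [Real.norm_eq_abs])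
    (summable_norm_pow_div_factorial_mul_Lag_mul_pow n x (-y) (by positivity)) hLag
  simp only [← L2_eq_sum_choose_mul_Lag] at h
  rwa [div_mul_eq_mul_div]
end

section
/- For all real x, y and all real s, t with |s| + |t| < 1, the double series ∑_{n,m=0}^{∞} L_{n,m}(x,y) · s^n · t^m converges (absolutely) to e^{(-sx - ty)/(1 - s - t)} / (1 - s - t). -/
open Finset Nat

theorem Summable.hasSum_of_hasSum_fiberwise {α β γ : Type*} [AddCommMonoid α]
    [TopologicalSpace α] [ContinuousAdd α] [T3Space α] {F : β × γ → α} {g : β → α} {a : α}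
    (hF : Summable F)
    (hfib : ∀ b, HasSum (fun c => F (b, c)) (g b)) (hg : HasSum g a) : HasSum F a :=
  hg.unique (hF.hasSum.prod_fiberwise hfib) ▸ hF.hasSum

theorem hasSum_prod_of_nonneg {β γ : Type*} {F : β × γ → ℝ} {g : β → ℝ} {a : ℝ} (hF : 0 ≤ F)
    (hfib : ∀ b, HasSum (fun c => F (b, c)) (g b)) (hg : HasSum g a) : HasSum F a := by
  refine Summable.hasSum_of_hasSum_fiberwise ?_ hfib hg
  exact (summable_prod_of_nonneg hF).2
    ⟨fun b => (hfib b).summable, hg.summable.congr fun b => ((hfib b).tsum_eq).symm⟩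

theorem hasSum_choose_mul_pow_mul_pow {R : Type*} [CommSemiring R] [TopologicalSpace R]
    (s t : R) (p : ℕ) :
    HasSum (fun a => (p.choose a : R) * s ^ a * t ^ (p - a)) ((s + t) ^ p) := by
  have hvanish : ∀ a ∉ range (p + 1), (p.choose a : R) * s ^ a * t ^ (p - a) = 0 :=
    fun a ha => by simp [choose_eq_zero_of_lt (not_lt.1 (mt mem_range.2 ha))]
  have hfin : HasSum (fun a => (p.choose a : R) * s ^ a * t ^ (p - a)) _ :=
    hasSum_sum_of_ne_finset_zero hvanish
  convert hfin using 1
  rw [add_pow]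
  exact sum_congr rfl fun a _ => by ring

theorem Real.hasSum_pow_div_factorial (z : ℝ) : HasSum (fun n => z ^ n / n !) (Real.exp z) := by
  rw [Real.exp_eq_exp_ℝ]
  exact NormedSpace.expSeries_div_hasSum_exp z

theorem hasSum_pow_div_factorial_mul (u v : ℝ) :
    HasSum (fun ji : ℕ × ℕ => u ^ ji.1 / ji.1 ! * (v ^ ji.2 / ji.2 !))
      (Real.exp u * Real.exp v) := by
  have hu := Real.summable_pow_div_factorial u
  have hv := Real.summable_pow_div_factorial v
  have hprod := summable_mul_of_summable_norm hu.norm hv.norm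
  exact (Real.hasSum_pow_div_factorial u).mul (Real.hasSum_pow_div_factorial v) hprod

theorem choose_add_mul_choose_add (A B j i : ℕ) :
    (A + B + (j + i)).choose (j + i) * (A + B).choose A =
      (i + B + (j + A)).choose B * (j + A + i).choose A := by
  have h := choose_mul (n := A + B + (j + i)) (k := A + B) (s := B) (le_add_self)
  rw [← choose_symm_add (a := A + B), choose_symm_add (a := A), h,
    show A + B + (j + i) = i + B + (j + A) by ring,
    show i + B + (j + A) - B = j + A + i by omega, Nat.add_sub_cancel]

noncomputable def genTerm (x y s t : ℝ) : (ℕ × ℕ) × (ℕ × ℕ) → ℝ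
  | ((j, i), (p, a)) =>
    (s * x) ^ j / j ! * ((t * y) ^ i / i !) *
      ((p + (j + i)).choose (j + i) * (p.choose a * s ^ a * t ^ (p - a)))

section genTerm

variable (x y s t : ℝ)

theorem abs_genTerm (q : (ℕ × ℕ) × (ℕ × ℕ)) :
    |genTerm x y s t q| = genTerm |x| |y| |s| |t| q := by
  obtain ⟨⟨j, i⟩, p, a⟩ := q
  simp [genTerm, abs_mul, abs_div, abs_pow, Nat.abs_cast]

variable {x y s t} in
theorem genTerm_nonneg (hx : 0 ≤ x) (hy : 0 ≤ y) (hs : 0 ≤ s) (ht : 0 ≤ t) :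
    0 ≤ genTerm x y s t := by
  rintro ⟨⟨j, i⟩, p, a⟩
  simp only [genTerm, Pi.zero_apply]
  positivity

theorem hasSum_genTerm_row (j i p : ℕ) :
    HasSum (fun a => genTerm x y s t ((j, i), (p, a)))
      ((s * x) ^ j / j ! * ((t * y) ^ i / i !) * ((p + (j + i)).choose (j + i) * (s + t) ^ p)) :=
  ((hasSum_choose_mul_pow_mul_pow s t p).mul_left _).mul_left _

variable {s t} in
theorem hasSum_genTerm_col (h : |s + t| < 1) (j i : ℕ) :
    HasSum (fun p => (s * x) ^ j / j ! * ((t * y) ^ i / i !) *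
        ((p + (j + i)).choose (j + i) * (s + t) ^ p))
      (1 / (1 - (s + t)) *
        ((s * x / (1 - (s + t))) ^ j / j ! * ((t * y / (1 - (s + t))) ^ i / i !))) := by
  have hr : 1 - (s + t) ≠ 0 := by linarith [le_abs_self (s + t)]
  have hval : (s * x) ^ j / j ! * ((t * y) ^ i / i !) * (1 / (1 - (s + t)) ^ (j + i + 1)) =
      1 / (1 - (s + t)) *
        ((s * x / (1 - (s + t))) ^ j / j ! * ((t * y / (1 - (s + t))) ^ i / i !)) := by
    rw [div_pow, div_pow]
    field_simp
    ring
  have hgeom := (hasSum_choose_mul_geometric_of_norm_lt_one (j + i) h).mul_left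
    ((s * x) ^ j / j ! * ((t * y) ^ i / i !))
  rw [← hval]
  exact hgeom

variable {x y s t}

theorem hasSum_genTerm_of_nonneg (hx : 0 ≤ x) (hy : 0 ≤ y) (hs : 0 ≤ s) (ht : 0 ≤ t)
    (h : s + t < 1) :
    HasSum (genTerm x y s t)
      (1 / (1 - (s + t)) *
        (Real.exp (s * x / (1 - (s + t))) * Real.exp (t * y / (1 - (s + t))))) := by
  have hst : |s + t| < 1 := abs_lt.2 ⟨by linarith, h⟩
  have hnonneg := genTerm_nonneg hx hy hs ht
  refine hasSum_prod_of_nonneg hnonneg (fun ji => ?_)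
    ((hasSum_pow_div_factorial_mul _ _).mul_left _)
  exact hasSum_prod_of_nonneg (fun _ => hnonneg _) (hasSum_genTerm_row x y s t ji.1 ji.2)
    (hasSum_genTerm_col x y hst ji.1 ji.2)

theorem summable_genTerm (h : |s| + |t| < 1) : Summable (genTerm x y s t) := by
  have habs := hasSum_genTerm_of_nonneg (abs_nonneg x) (abs_nonneg y) (abs_nonneg s)
    (abs_nonneg t) h
  exact Summable.of_abs (habs.summable.congr fun q => (abs_genTerm x y s t q).symm)

theorem hasSum_genTerm (h : |s| + |t| < 1) :
    HasSum (genTerm x y s t)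
      (1 / (1 - (s + t)) *
        (Real.exp (s * x / (1 - (s + t))) * Real.exp (t * y / (1 - (s + t))))) := by
  have hst : |s + t| < 1 := (abs_add_le s t).trans_lt h
  have hS := summable_genTerm (x := x) (y := y) h
  refine hS.hasSum_of_hasSum_fiberwise (fun ji => ?_)
    ((hasSum_pow_div_factorial_mul _ _).mul_left _)
  exact (hS.prod_factor ji).hasSum_of_hasSum_fiberwise (hasSum_genTerm_row x y s t ji.1 ji.2)
    (hasSum_genTerm_col x y hst ji.1 ji.2)

end genTerm

/-- The term `((j, i), (p, a))` of `genTerm` carries `s ^ (j + a) * t ^ (i + (p - a))`;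
this indexes the terms with `a ≤ p` (the others vanish) by these exponents `(n, m)`
together with `(j, i)`. -/
def termIndex (q : Σ nm : ℕ × ℕ, Fin (nm.1 + 1) × Fin (nm.2 + 1)) : (ℕ × ℕ) × (ℕ × ℕ) :=
  ((q.2.1, q.2.2), ((q.1.1 - q.2.1) + (q.1.2 - q.2.2), q.1.1 - q.2.1))

theorem termIndex_injective : Function.Injective termIndex := by
  rintro ⟨⟨n, m⟩, ⟨j, i⟩⟩ ⟨⟨n', m'⟩, ⟨j', i'⟩⟩ h
  simp only [termIndex, Prod.mk.injEq] at h
  obtain ⟨⟨hj, hi⟩, hp, ha⟩ := h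
  have hn : n = n' := by omega
  have hm : m = m' := by omega
  subst hn hm
  simp [Fin.ext hj, Fin.ext hi]

theorem genTerm_eq_zero_of_notMem_range_termIndex (x y s t : ℝ) {q : (ℕ × ℕ) × (ℕ × ℕ)}
    (hq : q ∉ Set.range termIndex) : genTerm x y s t q = 0 := by
  obtain ⟨⟨j, i⟩, p, a⟩ := q
  obtain hap | hpa := le_or_gt a p
  · refine absurd ⟨⟨(j + a, i + (p - a)), (⟨j, by omega⟩, ⟨i, by omega⟩)⟩, ?_⟩ hq
    simp only [termIndex, Nat.add_sub_cancel_left, Nat.add_sub_cancel' hap]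
  · simp [genTerm, choose_eq_zero_of_lt hpa]

theorem HasSum.sum_genTerm_termIndex {x y s t a : ℝ} (h : HasSum (genTerm x y s t) a) :
    HasSum (fun nm : ℕ × ℕ => ∑ c, genTerm x y s t (termIndex ⟨nm, c⟩)) a :=
  ((termIndex_injective.hasSum_iff
    fun _ hq => genTerm_eq_zero_of_notMem_range_termIndex x y s t hq).2 h).sigma
    fun _ => hasSum_fintype _

theorem genTerm_neg_termIndex (x y s t : ℝ) {n m j i : ℕ} (hj : j ≤ n) (hi : i ≤ m) :
    genTerm (-x) (-y) s t ((j, i), ((n - j) + (m - i), n - j)) =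
      (-1) ^ (i + j) / (i ! * j !) * (m + n).choose (m - i) * (n + i).choose (n - j) *
        x ^ j * y ^ i * s ^ n * t ^ m := by
  obtain ⟨A, rfl⟩ := Nat.exists_eq_add_of_le hj
  obtain ⟨B, rfl⟩ := Nat.exists_eq_add_of_le hi
  have hchoose := congrArg (Nat.cast (R := ℝ)) (choose_add_mul_choose_add A B j i)
  push_cast at hchoose
  simp only [genTerm, Nat.add_sub_cancel_left]
  linear_combination
    (-1) ^ (i + j) / (i ! * j !) * x ^ j * y ^ i * s ^ (j + A) * t ^ (i + B) * hchoose

theorem sum_genTerm_neg_termIndex (x y s t : ℝ) (nm : ℕ × ℕ) :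
    ∑ c, genTerm (-x) (-y) s t (termIndex ⟨nm, c⟩) =
      L2 nm.1 nm.2 x y * s ^ nm.1 * t ^ nm.2 := by
  obtain ⟨n, m⟩ := nm
  simp only [termIndex, L2, Fintype.sum_prod_type_right, sum_mul, Finset.sum_range]
  refine sum_congr rfl fun i _ => sum_congr rfl fun j _ => ?_
  exact genTerm_neg_termIndex x y s t (Fin.is_le j) (Fin.is_le i)

theorem abs_L2_mul_le (x y s t : ℝ) (nm : ℕ × ℕ) :
    |L2 nm.1 nm.2 x y * s ^ nm.1 * t ^ nm.2| ≤
      ∑ c, genTerm |x| |y| |s| |t| (termIndex ⟨nm, c⟩) := by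
  rw [← sum_genTerm_neg_termIndex]
  refine (abs_sum_le_sum_abs _ _).trans_eq (sum_congr rfl fun c _ => ?_)
  rw [abs_genTerm, abs_neg, abs_neg]

theorem stmt10 (x y s t : ℝ) (h : |s| + |t| < 1) :
    Summable (fun p : ℕ × ℕ => |L2 p.1 p.2 x y * s^p.1 * t^p.2|) ∧
    HasSum (fun p : ℕ × ℕ => L2 p.1 p.2 x y * s^p.1 * t^p.2)
      (Real.exp ((-s*x - t*y)/(1 - s - t)) / (1 - s - t)) := by
  have habs := (hasSum_genTerm_of_nonneg (abs_nonneg x) (abs_nonneg y) (abs_nonneg s)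
    (abs_nonneg t) h).sum_genTerm_termIndex
  have hsum := (hasSum_genTerm (x := -x) (y := -y) h).sum_genTerm_termIndex
  simp only [sum_genTerm_neg_termIndex] at hsum
  refine ⟨habs.summable.of_nonneg_of_le (fun _ => abs_nonneg _) (abs_L2_mul_le x y s t), ?_⟩
  convert hsum using 1
  rw [← Real.exp_add, ← add_div, show 1 - (s + t) = 1 - s - t by ring]
  ring_nf
end

section
/- For every nonnegative integer n and all real x, y, s, t with |s| + |t| < 1 and s + t ≠ 1, the n-th partial derivative with respect to s of the function F(s,t) = e^{(-xs - yt)/(1-s-t)} / (1-s-t) equals (e^{(-xs-yt)/(1-s-t)} / (1-s-t)^{n+1}) · n! · L_n(((1-t)x + ty)/(1-s-t)), where L_n is the classical Laguerre polynomial. -/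
lemma choose_idR (n k : ℕ) :
    ((n:ℝ)+1) * ((n+1).choose (k+1) : ℝ)
      = ((n:ℝ)+2+(k:ℝ)) * (n.choose (k+1) : ℝ) + ((k:ℝ)+1) * (n.choose k : ℝ) := by
  rcases le_or_gt (k+1) n with hk | hk
  · have h1 : ((n+1).choose (k+1) : ℝ) = (n.choose k : ℝ) + (n.choose (k+1) : ℝ) := by
      exact_mod_cast congrArg (Nat.cast : ℕ → ℝ) (Nat.choose_succ_succ n k)
    have h2 : (n.choose (k+1) : ℝ) * ((k:ℝ)+1) = (n.choose k : ℝ) * ((n:ℝ) - (k:ℝ)) := by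
      have h := Nat.choose_succ_right_eq n k
      have hc : ((n - k : ℕ) : ℝ) = (n:ℝ) - (k:ℝ) := by
        rw [Nat.cast_sub (by omega)]
      calc (n.choose (k+1) : ℝ) * ((k:ℝ)+1) = ((n.choose (k+1) * (k+1) : ℕ) : ℝ) := by push_cast; ring
        _ = ((n.choose k * (n - k) : ℕ) : ℝ) := by rw [h]
        _ = (n.choose k : ℝ) * ((n:ℝ) - (k:ℝ)) := by rw [Nat.cast_mul, hc]
    linear_combination ((n:ℝ)+1) * h1 - h2
  · rcases eq_or_lt_of_le (Nat.lt_iff_add_one_le.mp hk) with he | hlt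
    · have hkn : k = n := by omega
      subst hkn
      simp [Nat.choose_self, Nat.choose_eq_zero_of_lt (Nat.lt_succ_self k)]
    · have h1 : n.choose (k+1) = 0 := Nat.choose_eq_zero_of_lt (by omega)
      have h2 : n.choose k = 0 := Nat.choose_eq_zero_of_lt (by omega)
      have h3 : (n+1).choose (k+1) = 0 := Nat.choose_eq_zero_of_lt (by omega)
      simp [h1, h2, h3]

lemma term_id (n j : ℕ) (A e w : ℝ) :
    (n.factorial:ℝ) * ((-1:ℝ)^(j+1) / ((j+1).factorial:ℝ)) * (n.choose (j+1) : ℝ) * A^(j+1) *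
      (((n:ℝ)+1+((j:ℝ)+1)) * (e * w^(j+1)))
    - (n.factorial:ℝ) * ((-1:ℝ)^j / (j.factorial:ℝ)) * (n.choose j : ℝ) * A^j *
      (A * (e * w^(j+1)))
    = ((n+1).factorial:ℝ) * ((-1:ℝ)^(j+1) / ((j+1).factorial:ℝ)) * ((n+1).choose (j+1) : ℝ) * A^(j+1) *
      (e * w^(j+1)) := by
  have hkey := choose_idR n j
  have hfj : ((j+1).factorial : ℝ) = ((j:ℝ)+1) * (j.factorial : ℝ) := by
    rw [Nat.factorial_succ]; push_cast; ring
  have hfn : (((n+1)).factorial : ℝ) = ((n:ℝ)+1) * (n.factorial : ℝ) := by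
    rw [Nat.factorial_succ]; push_cast; ring
  have hje : (j.factorial : ℝ) ≠ 0 := by exact_mod_cast (Nat.factorial_pos j).ne'
  have hj1 : ((j:ℝ)+1) ≠ 0 := by positivity
  have hrepl : ((j.factorial:ℝ))⁻¹ = ((j:ℝ)+1) * (((j:ℝ)+1)*(j.factorial:ℝ))⁻¹ := by
    rw [mul_inv]; field_simp
  rw [hfj, hfn]
  simp only [div_eq_mul_inv]
  rw [hrepl]
  linear_combination ((n.factorial:ℝ) * (-1:ℝ)^j * A^(j+1) * e * w^(j+1) *
    ((((j:ℝ)+1)*(j.factorial:ℝ))⁻¹)) * hkey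

lemma keyid (n : ℕ) (A e w : ℝ) :
    ∑ j ∈ Finset.range (n+1),
      (n.factorial:ℝ) * ((-1:ℝ)^j / (j.factorial:ℝ)) * (n.choose (n-j) : ℝ) * A^j *
        (((n:ℝ)+1+(j:ℝ)) * (e * w^j) - A * (e * w^(j+1)))
    = ∑ k ∈ Finset.range (n+2),
      ((n+1).factorial:ℝ) * ((-1:ℝ)^k / (k.factorial:ℝ)) * ((n+1).choose (n+1-k) : ℝ) * A^k *
        (e * w^k) := by
  set P : ℕ → ℝ := fun j =>
    (n.factorial:ℝ) * ((-1:ℝ)^j / (j.factorial:ℝ)) * (n.choose (n-j) : ℝ) * A^j *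
      (((n:ℝ)+1+(j:ℝ)) * (e * w^j)) with hP
  set S : ℕ → ℝ := fun j =>
    (n.factorial:ℝ) * ((-1:ℝ)^j / (j.factorial:ℝ)) * (n.choose (n-j) : ℝ) * A^j *
      (A * (e * w^(j+1))) with hS
  set R : ℕ → ℝ := fun k =>
    ((n+1).factorial:ℝ) * ((-1:ℝ)^k / (k.factorial:ℝ)) * ((n+1).choose (n+1-k) : ℝ) * A^k *
      (e * w^k) with hR
  have hL : ∀ j, (n.factorial:ℝ) * ((-1:ℝ)^j / (j.factorial:ℝ)) * (n.choose (n-j) : ℝ) * A^j *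
        (((n:ℝ)+1+(j:ℝ)) * (e * w^j) - A * (e * w^(j+1))) = P j - S j := by
    intro j; simp only [hP, hS]; ring
  simp only [hL]
  rw [Finset.sum_sub_distrib]
  rw [Finset.sum_range_succ' P n, Finset.sum_range_succ S n,
    Finset.sum_range_succ' R (n+1), Finset.sum_range_succ (fun k => R (k+1)) n]
  have hne : (n.factorial : ℝ) ≠ 0 := by exact_mod_cast (Nat.factorial_pos n).ne'
  have hne1 : ((n+1).factorial : ℝ) ≠ 0 := by exact_mod_cast (Nat.factorial_pos (n+1)).ne'
  have hP0 : P 0 = R 0 := by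
    simp only [hP, hR]
    simp [Nat.choose_self, Nat.factorial_succ]
    ring
  have hSn : S n = - R (n+1) := by
    simp only [hS, hR]
    rw [Nat.sub_self, Nat.sub_self]
    simp only [Nat.choose_zero_right, Nat.cast_one, pow_succ]
    field_simp
  have hterm : ∀ j ∈ Finset.range n, P (j+1) - S j = R (j+1) := by
    intro j hj
    rw [Finset.mem_range] at hj
    have c1 : (n.choose (n-(j+1)) : ℝ) = (n.choose (j+1) : ℝ) := by
      rw [Nat.choose_symm (by omega)]
    have c2 : (n.choose (n-j) : ℝ) = (n.choose j : ℝ) := by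
      rw [Nat.choose_symm (by omega)]
    have c3 : ((n+1).choose (n+1-(j+1)) : ℝ) = ((n+1).choose (j+1) : ℝ) := by
      rw [Nat.choose_symm (by omega)]
    simp only [hP, hS, hR, c1, c2, c3]
    push_cast
    have := term_id n j A e w
    push_cast at this
    linarith [this]
  have hmain : (∑ j ∈ Finset.range n, P (j+1)) - ∑ j ∈ Finset.range n, S j
      = ∑ j ∈ Finset.range n, R (j+1) := by
    rw [← Finset.sum_sub_distrib]
    exact Finset.sum_congr rfl hterm
  linarith [hmain, hP0, hSn]


-- expansion of the target function as a sum
lemma g_expand (n : ℕ) (x y t u : ℝ) (hc : (1:ℝ)-u-t ≠ 0) :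
    Real.exp ((-x*u - y*t)/(1-u-t)) / (1-u-t)^(n+1) * (n.factorial:ℝ) *
        Lag n 0 (((1-t)*x + t*y)/(1-u-t))
      = ∑ j ∈ Finset.range (n+1),
          ((n.factorial:ℝ) * ((-1:ℝ)^j / (j.factorial:ℝ)) * (n.choose (n-j) : ℝ) * ((1-t)*x+t*y)^j) *
            (Real.exp ((-x*u - y*t)/(1-u-t)) / (1-u-t)^(n+1+j)) := by
  unfold Lag
  rw [Finset.mul_sum]
  refine Finset.sum_congr rfl fun j _ => ?_
  simp only [Nat.add_zero]
  rw [div_pow]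
  rw [pow_add]
  field_simp
  ring

-- derivative of the basic block
lemma phi_deriv (x y t u : ℝ) (m : ℕ) (hc : (1:ℝ)-u-t ≠ 0) :
    HasDerivAt (fun u => Real.exp ((-x*u - y*t)/(1-u-t)) / (1-u-t)^m)
      ((m:ℝ) * Real.exp ((-x*u - y*t)/(1-u-t)) / (1-u-t)^(m+1)
        - ((1-t)*x+t*y) * Real.exp ((-x*u - y*t)/(1-u-t)) / (1-u-t)^(m+2)) u := by
  have hc' : HasDerivAt (fun u : ℝ => 1-u-t) (-1) u := by
    simpa using ((hasDerivAt_id u).const_sub 1).sub_const t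
  have hnum : HasDerivAt (fun u : ℝ => -x*u - y*t) (-x) u := by
    simpa using ((hasDerivAt_id u).const_mul (-x)).sub_const (y*t)
  have hq : HasDerivAt (fun u : ℝ => (-x*u - y*t)/(1-u-t))
      (((-x)*(1-u-t) - (-x*u - y*t)*(-1))/(1-u-t)^2) u := hnum.div hc' hc
  have hE : HasDerivAt (fun u : ℝ => Real.exp ((-x*u - y*t)/(1-u-t)))
      (Real.exp ((-x*u - y*t)/(1-u-t)) * (((-x)*(1-u-t) - (-x*u - y*t)*(-1))/(1-u-t)^2)) u := hq.exp
  have hpow : HasDerivAt (fun u : ℝ => (1-u-t)^m) ((m:ℝ)*(1-u-t)^(m-1)*(-1)) u := hc'.pow m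
  have hdiv := hE.div hpow (pow_ne_zero m hc)
  refine hdiv.congr_deriv ?_
  rcases m with _ | k
  · simp
    field_simp
    ring
  · have hk : (k+1) - 1 = k := rfl
    rw [hk]
    push_cast
    field_simp
    ring


lemma g_deriv (n : ℕ) (x y t u : ℝ) (hc : (1:ℝ)-u-t ≠ 0) :
    HasDerivAt (fun u : ℝ => Real.exp ((-x*u - y*t)/(1-u-t)) / (1-u-t)^(n+1) * (n.factorial:ℝ) *
        Lag n 0 (((1-t)*x + t*y)/(1-u-t)))
      (Real.exp ((-x*u - y*t)/(1-u-t)) / (1-u-t)^(n+2) * ((n+1).factorial:ℝ) *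
        Lag (n+1) 0 (((1-t)*x + t*y)/(1-u-t))) u := by
  set A := (1-t)*x + t*y with hA
  -- the sum function
  have hsum : HasDerivAt (fun u : ℝ => ∑ j ∈ Finset.range (n+1),
      ((n.factorial:ℝ) * ((-1:ℝ)^j / (j.factorial:ℝ)) * (n.choose (n-j) : ℝ) * A^j) *
        (Real.exp ((-x*u - y*t)/(1-u-t)) / (1-u-t)^(n+1+j)))
      (∑ j ∈ Finset.range (n+1),
        ((n.factorial:ℝ) * ((-1:ℝ)^j / (j.factorial:ℝ)) * (n.choose (n-j) : ℝ) * A^j) *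
          (((n+1+j : ℕ):ℝ) * Real.exp ((-x*u - y*t)/(1-u-t)) / (1-u-t)^((n+1+j)+1)
            - A * Real.exp ((-x*u - y*t)/(1-u-t)) / (1-u-t)^((n+1+j)+2))) u := by
    apply HasDerivAt.fun_sum
    intro j _
    exact (phi_deriv x y t u (n+1+j) hc).const_mul _
  -- the open set
  have hopen : IsOpen {v : ℝ | (1:ℝ)-v-t ≠ 0} := by
    have hcont : Continuous fun v : ℝ => 1-v-t := by continuity
    exact isOpen_ne.preimage hcont
  have hmem : {v : ℝ | (1:ℝ)-v-t ≠ 0} ∈ nhds u := hopen.mem_nhds hc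
  have heq : (fun u : ℝ => Real.exp ((-x*u - y*t)/(1-u-t)) / (1-u-t)^(n+1) * (n.factorial:ℝ) *
        Lag n 0 (((1-t)*x + t*y)/(1-u-t)))
      =ᶠ[nhds u] (fun u : ℝ => ∑ j ∈ Finset.range (n+1),
      ((n.factorial:ℝ) * ((-1:ℝ)^j / (j.factorial:ℝ)) * (n.choose (n-j) : ℝ) * A^j) *
        (Real.exp ((-x*u - y*t)/(1-u-t)) / (1-u-t)^(n+1+j))) := by
    filter_upwards [hmem] with v hv
    exact g_expand n x y t v hv
  have H := hsum.congr_of_eventuallyEq heq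
  -- now identify the derivative value
  refine H.congr_deriv ?_
  symm
  rw [g_expand (n+1) x y t u hc]
  rw [show (n+1)+1 = n+2 from rfl]
  -- rewrite powers in terms of w := (1-u-t)⁻¹
  have hdiv : ∀ m : ℕ, Real.exp ((-x*u - y*t)/(1-u-t)) / (1-u-t)^m
      = Real.exp ((-x*u - y*t)/(1-u-t)) * ((1-u-t)⁻¹)^m := by
    intro m
    rw [div_eq_mul_inv, inv_pow]
  have LHS := keyid n A (Real.exp ((-x*u - y*t)/(1-u-t)) * ((1-u-t)⁻¹)^(n+2)) ((1-u-t)⁻¹)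
  calc ∑ k ∈ Finset.range (n+2),
      ((n+1).factorial:ℝ) * ((-1:ℝ)^k / (k.factorial:ℝ)) * ((n+1).choose (n+1-k) : ℝ) * A^k *
        (Real.exp ((-x*u - y*t)/(1-u-t)) / (1-u-t)^(n+2+k))
      = ∑ k ∈ Finset.range (n+2),
      ((n+1).factorial:ℝ) * ((-1:ℝ)^k / (k.factorial:ℝ)) * ((n+1).choose (n+1-k) : ℝ) * A^k *
        ((Real.exp ((-x*u - y*t)/(1-u-t)) * ((1-u-t)⁻¹)^(n+2)) * ((1-u-t)⁻¹)^k) := by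
        refine Finset.sum_congr rfl fun k _ => ?_
        rw [hdiv (n+2+k), pow_add]
        ring
    _ = ∑ j ∈ Finset.range (n+1),
      (n.factorial:ℝ) * ((-1:ℝ)^j / (j.factorial:ℝ)) * (n.choose (n-j) : ℝ) * A^j *
        (((n:ℝ)+1+(j:ℝ)) * ((Real.exp ((-x*u - y*t)/(1-u-t)) * ((1-u-t)⁻¹)^(n+2)) * ((1-u-t)⁻¹)^j)
          - A * ((Real.exp ((-x*u - y*t)/(1-u-t)) * ((1-u-t)⁻¹)^(n+2)) * ((1-u-t)⁻¹)^(j+1))) := LHS.symm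
    _ = ∑ j ∈ Finset.range (n+1),
        ((n.factorial:ℝ) * ((-1:ℝ)^j / (j.factorial:ℝ)) * (n.choose (n-j) : ℝ) * A^j) *
          (((n+1+j : ℕ):ℝ) * Real.exp ((-x*u - y*t)/(1-u-t)) / (1-u-t)^((n+1+j)+1)
            - A * Real.exp ((-x*u - y*t)/(1-u-t)) / (1-u-t)^((n+1+j)+2)) := by
        refine Finset.sum_congr rfl fun j _ => ?_
        rw [mul_div_assoc, hdiv ((n+1+j)+1), mul_div_assoc, hdiv ((n+1+j)+2)]
        push_cast
        rw [pow_add, pow_add, pow_add, pow_add]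
        ring


theorem stmt11 (n : ℕ) (x y s t : ℝ) (h : |s| + |t| < 1) (h' : s + t ≠ 1) :
    iteratedDeriv n (fun u : ℝ => Real.exp ((-x*u - y*t)/(1-u-t)) / (1-u-t)) s =
      Real.exp ((-x*s - y*t)/(1-s-t)) / (1-s-t)^(n+1) * (Nat.factorial n) *
        Lag n 0 (((1-t)*x + t*y)/(1-s-t)) := by
  have hst : (1:ℝ) - s - t ≠ 0 := by
    have h1 : s ≤ |s| := le_abs_self s
    have h2 : t ≤ |t| := le_abs_self t
    nlinarith
  have key : ∀ m : ℕ, ∀ u : ℝ, (1:ℝ)-u-t ≠ 0 →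
      iteratedDeriv m (fun u : ℝ => Real.exp ((-x*u - y*t)/(1-u-t)) / (1-u-t)) u =
        Real.exp ((-x*u - y*t)/(1-u-t)) / (1-u-t)^(m+1) * (m.factorial:ℝ) *
          Lag m 0 (((1-t)*x + t*y)/(1-u-t)) := by
    intro m
    induction m with
    | zero =>
      intro u hu
      rw [iteratedDeriv_zero]
      simp [Lag]
    | succ m ih =>
      intro u hu
      rw [iteratedDeriv_succ]
      have hopen : IsOpen {v : ℝ | (1:ℝ)-v-t ≠ 0} := by
        have hcont : Continuous fun v : ℝ => 1-v-t := by continuity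
        exact isOpen_ne.preimage hcont
      have hmem : {v : ℝ | (1:ℝ)-v-t ≠ 0} ∈ nhds u := hopen.mem_nhds hu
      have hev : iteratedDeriv m (fun u : ℝ => Real.exp ((-x*u - y*t)/(1-u-t)) / (1-u-t))
          =ᶠ[nhds u] (fun u : ℝ => Real.exp ((-x*u - y*t)/(1-u-t)) / (1-u-t)^(m+1) * (m.factorial:ℝ) *
            Lag m 0 (((1-t)*x + t*y)/(1-u-t))) := by
        filter_upwards [hmem] with v hv
        exact ih v hv
      rw [hev.deriv_eq]
      rw [(g_deriv m x y t u hu).deriv]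
  exact key n s hst
end

section
/- For every positive integer k and all real x, y, the sum over all pairs (n,m) of nonnegative integers with n + m = k satisfies ∑_{n+m=k} L_{n,m}(x,y) = 2^k · L_k((x+y)/2), where L_k is the classical Laguerre polynomial. -/
/-!
Writing `n = s + t` and `k - n = i + a`, where `s, i` are the exponents of `x, y`, the left side
is a sum over the quadruples with `s + t + i + a = k`. Regrouped by `j = s + i`, the sum over
`t + a = k - j` of `C(k, a) C(j + t, t)` is `2^(k-j) C(k, j)`, and the sum over `s + i = j` of
`(-x)^s/s! (-y)^i/i!` is `(-(x+y))^j/j!`: this is the `j`-th term of `2^k L_k((x+y)/2)`.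
-/

open Finset
open scoped Nat

theorem Finset.sum_antidiagonal_antidiagonal_comm {A M : Type*} [AddCommMonoid A]
    [HasAntidiagonal A] [AddCommMonoid M] (n : A) (f : A × A → A × A → M) :
    ∑ p ∈ antidiagonal n, ∑ q ∈ antidiagonal p.1, ∑ r ∈ antidiagonal p.2, f q r =
      ∑ p ∈ antidiagonal n, ∑ q ∈ antidiagonal p.1, ∑ r ∈ antidiagonal p.2,
        f (q.1, r.1) (q.2, r.2) := by
  simp only [← sum_product', sum_sigma']
  let e : (_ : A × A) × (A × A) × (A × A) → (_ : A × A) × (A × A) × (A × A) :=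
    fun x => ⟨(x.2.1.1 + x.2.2.1, x.2.1.2 + x.2.2.2), (x.2.1.1, x.2.2.1), (x.2.1.2, x.2.2.2)⟩
  apply sum_nbij' e e <;> aesop (add simp [add_add_add_comm])

theorem add_pow_div_factorial_s14 {K : Type*} [Field K] [CharZero K] (x y : K) (n : ℕ) :
    (x + y) ^ n / n ! = ∑ p ∈ antidiagonal n, x ^ p.1 / p.1 ! * (y ^ p.2 / p.2 !) := by
  rw [(Commute.all x y).add_pow', sum_div]
  refine sum_congr rfl fun p hp => ?_
  obtain ⟨i, j⟩ := p
  obtain rfl : i + j = n := mem_antidiagonal.mp hp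
  rw [nsmul_eq_mul, Nat.choose_symm_add, ← Nat.add_choose_mul_factorial_mul_factorial i j]
  have : ((i + j).choose j : K) ≠ 0 := by exact_mod_cast (Nat.choose_pos (by omega)).ne'
  push_cast
  field_simp

theorem Nat.sum_antidiagonal_choose_mul_choose (j n : ℕ) :
    ∑ p ∈ antidiagonal n, (j + n).choose p.2 * (j + p.1).choose p.1 =
      2 ^ n * (j + n).choose j := by
  calc ∑ p ∈ antidiagonal n, (j + n).choose p.2 * (j + p.1).choose p.1
      = ∑ p ∈ antidiagonal n, (j + n).choose j * n.choose p.1 := by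
        refine sum_congr rfl fun p hp => ?_
        obtain ⟨t, a⟩ := p
        obtain rfl : t + a = n := mem_antidiagonal.mp hp
        rw [Nat.choose_symm_of_eq_add (by ring : j + (t + a) = a + (j + t)),
          ← Nat.choose_symm_add, Nat.choose_mul (Nat.le_add_right j t)]
        simp
    _ = 2 ^ n * (j + n).choose j := by
        rw [← mul_sum, Nat.sum_antidiagonal_eq_sum_range_succ_mk, Nat.sum_range_choose, mul_comm]

theorem L2_eq_sum_antidiagonal (n m : ℕ) (x y : ℝ) :
    L2 n m x y = ∑ q ∈ antidiagonal n, ∑ r ∈ antidiagonal m,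
      (-x) ^ q.1 / q.1 ! * ((-y) ^ r.1 / r.1 !) *
        ((n + m).choose r.2 * (n + r.1).choose q.2 : ℕ) := by
  rw [L2, sum_comm]
  simp only [Nat.sum_antidiagonal_eq_sum_range_succ_mk, neg_pow x, neg_pow y]
  refine sum_congr rfl fun s _ => sum_congr rfl fun i _ => ?_
  push_cast
  rw [add_comm n m, pow_add]
  ring

theorem two_pow_mul_Lag_zero (k : ℕ) (z : ℝ) :
    2 ^ k * Lag k 0 (z / 2) =
      ∑ p ∈ antidiagonal k, (-z) ^ p.1 / p.1 ! * (2 ^ p.2 * k.choose p.1 : ℕ) := by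
  rw [Lag, mul_sum, Nat.sum_antidiagonal_eq_sum_range_succ_mk]
  refine sum_congr rfl fun j hj => ?_
  have hjk : j ≤ k := Nat.lt_succ_iff.mp (mem_range.mp hj)
  obtain ⟨u, rfl⟩ := Nat.exists_eq_add_of_le hjk
  rw [add_zero, Nat.choose_symm hjk, neg_pow z, div_pow, Nat.add_sub_cancel_left]
  push_cast
  rw [pow_add]
  field_simp

theorem stmt14_general (k : ℕ) (x y : ℝ) :
    ∑ n ∈ Finset.range (k+1), L2 n (k-n) x y = 2^k * Lag k 0 ((x+y)/2) := by
  rw [← Nat.sum_antidiagonal_eq_sum_range_succ (fun n m => L2 n m x y), two_pow_mul_Lag_zero]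
  calc ∑ p ∈ antidiagonal k, L2 p.1 p.2 x y
      = ∑ p ∈ antidiagonal k, ∑ q ∈ antidiagonal p.1, ∑ r ∈ antidiagonal p.2,
          (-x) ^ q.1 / q.1 ! * ((-y) ^ r.1 / r.1 !) *
            (k.choose r.2 * (q.1 + q.2 + r.1).choose q.2 : ℕ) := by
        refine sum_congr rfl fun p hp => ?_
        rw [L2_eq_sum_antidiagonal, mem_antidiagonal.mp hp]
        refine sum_congr rfl fun q hq => ?_
        rw [mem_antidiagonal.mp hq]
    _ = ∑ p ∈ antidiagonal k, ∑ q ∈ antidiagonal p.1,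
          (-x) ^ q.1 / q.1 ! * ((-y) ^ q.2 / q.2 !) *
            (∑ r ∈ antidiagonal p.2, k.choose r.2 * (p.1 + r.1).choose r.1 : ℕ) := by
        rw [sum_antidiagonal_antidiagonal_comm]
        refine sum_congr rfl fun p _ => sum_congr rfl fun q hq => ?_
        rw [Nat.cast_sum, mul_sum]
        refine sum_congr rfl fun r _ => ?_
        rw [← mem_antidiagonal.mp hq, add_right_comm]
    _ = ∑ p ∈ antidiagonal k, (-(x + y)) ^ p.1 / p.1 ! * (2 ^ p.2 * k.choose p.1 : ℕ) := by
        refine sum_congr rfl fun p hp => ?_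
        rw [← mem_antidiagonal.mp hp, Nat.sum_antidiagonal_choose_mul_choose, ← sum_mul,
          neg_add, add_pow_div_factorial_s14]

theorem stmt14 (k : ℕ) (hk : 1 ≤ k) (x y : ℝ) :
    ∑ n ∈ Finset.range (k+1), L2 n (k-n) x y = 2^k * Lag k 0 ((x+y)/2) :=
  stmt14_general k x y
end

section
/- For every positive integer k and all real x, y, the alternating sum ∑_{n+m=k} (-1)^m · L_{n,m}(x,y) = (y - x)^k / k! holds, where the sum is over all pairs (n,m) of nonnegative integers with n + m = k. -/
open Finset Nat

theorem Nat.choose_add_sub_mul_choose_add {a d t : ℕ} (h : t ≤ d) :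
    (a + d).choose (d - t) * (a + t).choose t = (a + d).choose a * d.choose t := by
  rw [Nat.choose_symm_of_eq_add (show a + d = (d - t) + (a + t) by omega),
    ← Nat.choose_symm_add, Nat.choose_mul (Nat.le_add_right a t)]
  simp

theorem sum_range_neg_one_pow_mul_choose_mul_choose {R : Type*} [CommRing R] (a d : ℕ) :
    ∑ t ∈ range (d + 1), (-1 : R) ^ (d - t) * (a + d).choose (d - t) * (a + t).choose t
      = (0 : R) ^ d := by
  have hbinom := add_pow (1 : R) (-1) d
  simp only [one_pow, one_mul, add_neg_cancel] at hbinom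
  calc _ = ∑ t ∈ range (d + 1), ((a + d).choose a : R) * ((-1 : R) ^ (d - t) * d.choose t) := by
        refine sum_congr rfl fun t ht => ?_
        rw [mul_assoc, ← Nat.cast_mul, Nat.choose_add_sub_mul_choose_add
          (Nat.lt_succ_iff.mp (mem_range.mp ht)), Nat.cast_mul]
        ring
    _ = (0 : R) ^ d := by
        rw [← mul_sum, ← hbinom]
        cases d <;> simp

theorem sum_Ico_neg_one_pow_mul_choose_mul_choose {R : Type*} [CommRing R] {k i s : ℕ}
    (h : i + s ≤ k) :
    ∑ n ∈ Ico s (k - i + 1), (-1 : R) ^ (k - n) * k.choose (k - n - i) * (n + i).choose (n - s)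
      = if s = k - i then (-1) ^ i else 0 := by
  obtain ⟨d, rfl⟩ := Nat.exists_eq_add_of_le h
  rw [sum_Ico_eq_sum_range, show i + s + d - i + 1 - s = d + 1 by omega]
  calc _ = ∑ t ∈ range (d + 1),
        (-1 : R) ^ i * ((-1) ^ (d - t) * (i + s + d).choose (d - t) * (i + s + t).choose t) := by
        refine sum_congr rfl fun t ht => ?_
        have htd := Nat.lt_succ_iff.mp (mem_range.mp ht)
        rw [show i + s + d - (s + t) = i + (d - t) by omega,
          show i + (d - t) - i = d - t by omega, show s + t + i = i + s + t by omega,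
          show s + t - s = t by omega, pow_add]
        ring
    _ = if s = i + s + d - i then (-1) ^ i else 0 := by
        rw [← mul_sum, sum_range_neg_one_pow_mul_choose_mul_choose, zero_pow_eq]
        simp only [mul_ite, mul_one, mul_zero]
        exact if_congr (by omega) rfl rfl

theorem neg_one_pow_mul_L2 {n k : ℕ} (h : n ≤ k) (x y : ℝ) :
    (-1 : ℝ) ^ (k - n) * L2 n (k - n) x y
      = ∑ i ∈ range (k - n + 1), ∑ s ∈ range (n + 1),
          (-1 : ℝ) ^ (i + s) / (i ! * s !) * x ^ s * y ^ i *
            ((-1) ^ (k - n) * k.choose (k - n - i) * (n + i).choose (n - s)) := by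
  rw [L2, Nat.sub_add_cancel h, mul_sum]
  refine sum_congr rfl fun i _ => ?_
  rw [mul_sum]
  refine sum_congr rfl fun s _ => ?_
  ring

theorem sub_pow_div_factorial (k : ℕ) (x y : ℝ) :
    (y - x) ^ k / k ! =
      ∑ i ∈ range (k + 1), (-1 : ℝ) ^ (k - i) / (i ! * (k - i)!) * x ^ (k - i) * y ^ i := by
  rw [sub_eq_add_neg, add_pow, sum_div]
  refine sum_congr rfl fun i hi => ?_
  rw [Nat.cast_choose ℝ (Nat.lt_succ_iff.mp (mem_range.mp hi)), neg_pow]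
  field_simp

theorem stmt15_general (k : ℕ) (x y : ℝ) :
    ∑ n ∈ Finset.range (k+1), (-1:ℝ)^(k-n) * L2 n (k-n) x y =
      (y - x)^k / (Nat.factorial k) := by
  calc _ = ∑ n ∈ range (k + 1), ∑ i ∈ range (k - n + 1), ∑ s ∈ range (n + 1),
          (-1 : ℝ) ^ (i + s) / (i ! * s !) * x ^ s * y ^ i *
            ((-1) ^ (k - n) * k.choose (k - n - i) * (n + i).choose (n - s)) :=
        sum_congr rfl fun n hn => neg_one_pow_mul_L2 (Nat.lt_succ_iff.mp (mem_range.mp hn)) x y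
    _ = ∑ i ∈ range (k + 1), ∑ s ∈ range (k - i + 1), ∑ n ∈ Ico s (k - i + 1),
          (-1 : ℝ) ^ (i + s) / (i ! * s !) * x ^ s * y ^ i *
            ((-1) ^ (k - n) * k.choose (k - n - i) * (n + i).choose (n - s)) := by
        rw [sum_comm' (t' := range (k + 1)) (s' := fun i => range (k - i + 1))
          (fun n i => by simp only [mem_range]; omega)]
        refine sum_congr rfl fun i _ => sum_comm' fun n s => ?_
        simp only [mem_range, mem_Ico]
        omega
    _ = ∑ i ∈ range (k + 1), ∑ s ∈ range (k - i + 1),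
          (-1 : ℝ) ^ (i + s) / (i ! * s !) * x ^ s * y ^ i *
            if s = k - i then (-1) ^ i else 0 := by
        refine sum_congr rfl fun i hi => sum_congr rfl fun s hs => ?_
        rw [← mul_sum, sum_Ico_neg_one_pow_mul_choose_mul_choose]
        simp only [mem_range] at hi hs
        omega
    _ = _ := by
        simp only [mul_ite, mul_zero, sum_ite_eq', mem_range, Nat.lt_succ_self, if_true,
          sub_pow_div_factorial]
        refine sum_congr rfl fun i _ => ?_
        have hsq : (-1 : ℝ) ^ i * (-1) ^ i = 1 := by rw [← mul_pow]; norm_num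
        rw [pow_add]
        linear_combination (-1 : ℝ) ^ (k - i) / (i ! * (k - i)!) * x ^ (k - i) * y ^ i * hsq

theorem stmt15 (k : ℕ) (hk : 1 ≤ k) (x y : ℝ) :
    ∑ n ∈ Finset.range (k+1), (-1:ℝ)^(k-n) * L2 n (k-n) x y =
      (y - x)^k / (Nat.factorial k) :=
  stmt15_general k x y
end

section
/- For every positive integer k and all nonzero real x, the identity ∑_{n+m=k} x^m · L_{n,m}(x, 1/x) = L_k(1) · (1 + x)^k holds, where the sum is over pairs (n,m) of nonnegative integers with n + m = k and L_k is the classical Laguerre polynomial. -/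
open Finset Nat

/-! After the substitution y = 1/x, the term x^m L_{n,m}(x, 1/x) is a sum of monomials
x^a x^s weighted by C(k, a), where a = m - i. For fixed a, the remaining double sum over
(n, s) is regrouped by j = i + s, and the inner sum over s is the binomial expansion of
(1 + x)^j / j!; this leaves C(k, a) x^a L_{k-a}(1 + x). The identity is then the case t = 1
of the multiplication formula ∑_a C(k, a) x^a L_{k-a}(t (1 + x)) = L_k(t) (1 + x)^k, which
follows from C(k, a) C(k-a, j) = C(k, j) C(k-j, a) and one more binomial expansion. -/

lemma sum_range_sum_range_succ_reflect {M : Type*} [AddCommMonoid M] (K : ℕ)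
    (f : ℕ → ℕ → M) :
    ∑ n ∈ range (K + 1), ∑ s ∈ range (n + 1), f n s =
      ∑ j ∈ range (K + 1), ∑ s ∈ range (j + 1), f (K - j + s) s := by
  have reflect_reflect : ∀ a b, a < K + 1 ∧ b < a + 1 → K - (K - a + b) + b = a := by omega
  rw [sum_sigma', sum_sigma']
  refine sum_nbij' (fun p ↦ ⟨K - p.1 + p.2, p.2⟩) (fun p ↦ ⟨K - p.1 + p.2, p.2⟩)
    ?_ ?_ ?_ ?_ ?_ <;>
    simp only [mem_sigma, mem_range, Sigma.forall, Sigma.mk.injEq, heq_eq_eq, and_true]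
  any_goals omega
  exact fun a b h ↦ by rw [reflect_reflect a b h]

lemma sum_pow_div_factorial_mul_factorial {K : Type*} [Field K] [CharZero K] (x : K) (j : ℕ) :
    ∑ s ∈ range (j + 1), x ^ s / ((j - s)! * s ! : K) = (1 + x) ^ j / j ! := by
  rw [add_comm (1 : K) x, add_pow, sum_div]
  refine sum_congr rfl fun s hs ↦ ?_
  rw [Nat.cast_choose K (mem_range_succ_iff.mp hs), one_pow, mul_one,
    mul_div_assoc', div_div, mul_div_mul_right _ _ (Nat.cast_ne_zero.2 (factorial_ne_zero j)),
    mul_comm (s ! : K)]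

lemma choose_mul_choose_sub_comm (k a j : ℕ) :
    k.choose a * (k - a).choose j = k.choose j * (k - j).choose a := by
  have h1 := Nat.choose_mul (n := k) (Nat.le_add_right a j)
  have h2 := Nat.choose_mul (n := k) (Nat.le_add_left j a)
  rw [Nat.add_sub_cancel_left] at h1
  rw [Nat.add_sub_cancel] at h2
  rw [← h1, ← h2, Nat.choose_symm_add]

lemma Lag_zero_eq (K : ℕ) (y : ℝ) :
    Lag K 0 y = ∑ j ∈ range (K + 1), K.choose j * ((-1) ^ j / j !) * y ^ j := by
  refine sum_congr rfl fun j hj ↦ ?_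
  rw [Nat.add_zero, Nat.choose_symm (mem_range_succ_iff.mp hj)]
  ring

lemma pow_mul_L2_one_div {x : ℝ} (hx : x ≠ 0) (n m : ℕ) :
    x ^ m * L2 n m x (1 / x) =
      ∑ a ∈ range (m + 1), (m + n).choose a * x ^ a * ∑ s ∈ range (n + 1),
        (-1) ^ (m - a + s) / ((m - a)! * s ! : ℝ) * (m + n - a).choose (n - s) * x ^ s := by
  rw [L2, mul_sum, ← sum_range_reflect]
  refine sum_congr rfl fun a ha ↦ ?_
  have ha : a ≤ m := mem_range_succ_iff.mp ha
  have hpow : x ^ m * (1 / x) ^ (m - a) = x ^ a := by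
    rw [← Nat.sub_add_cancel ha, pow_add, Nat.add_sub_cancel, one_div, inv_pow]
    field_simp
  rw [Nat.add_sub_cancel, Nat.sub_sub_self ha, show n + (m - a) = m + n - a by omega, mul_sum,
    mul_sum]
  refine sum_congr rfl fun s _ ↦ ?_
  linear_combination ((-1) ^ (m - a + s) / ((m - a)! * s ! : ℝ) * (m + n).choose a *
    (m + n - a).choose (n - s) * x ^ s) * hpow

lemma sum_sum_eq_Lag_one_add (K : ℕ) (x : ℝ) :
    ∑ n ∈ range (K + 1), ∑ s ∈ range (n + 1),
        (-1) ^ (K - n + s) / ((K - n)! * s ! : ℝ) * K.choose (n - s) * x ^ s =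
      Lag K 0 (1 + x) := by
  rw [sum_range_sum_range_succ_reflect, Lag_zero_eq]
  refine sum_congr rfl fun j hj ↦ ?_
  have hj : j ≤ K := mem_range_succ_iff.mp hj
  calc ∑ s ∈ range (j + 1), (-1) ^ (K - (K - j + s) + s) / ((K - (K - j + s))! * s ! : ℝ) *
        K.choose (K - j + s - s) * x ^ s
      = K.choose j * (-1) ^ j * ∑ s ∈ range (j + 1), x ^ s / ((j - s)! * s ! : ℝ) := by
        rw [mul_sum]
        refine sum_congr rfl fun s hs ↦ ?_
        have hs : s ≤ j := mem_range_succ_iff.mp hs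
        rw [show K - (K - j + s) = j - s by omega, Nat.sub_add_cancel hs, Nat.add_sub_cancel,
          Nat.choose_symm hj]
        ring
    _ = K.choose j * ((-1) ^ j / j !) * (1 + x) ^ j := by
        rw [sum_pow_div_factorial_mul_factorial]
        ring

lemma sum_choose_mul_pow_mul_Lag (k : ℕ) (x t : ℝ) :
    ∑ a ∈ range (k + 1), k.choose a * x ^ a * Lag (k - a) 0 (t * (1 + x)) =
      Lag k 0 t * (1 + x) ^ k := by
  simp_rw [Lag_zero_eq, mul_sum, sum_mul]
  rw [sum_comm' (t' := range (k + 1)) (s' := fun j ↦ range (k - j + 1))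
    (fun a j ↦ by simp only [mem_range]; omega)]
  refine sum_congr rfl fun j hj ↦ ?_
  have hj : j ≤ k := mem_range_succ_iff.mp hj
  calc ∑ a ∈ range (k - j + 1),
        k.choose a * x ^ a * ((k - a).choose j * ((-1) ^ j / j !) * (t * (1 + x)) ^ j)
      = (∑ a ∈ range (k - j + 1), x ^ a * 1 ^ (k - j - a) * (k - j).choose a) *
          (k.choose j * ((-1) ^ j / j !) * t ^ j * (1 + x) ^ j) := by
        rw [sum_mul]
        refine sum_congr rfl fun a _ ↦ ?_
        have : (k.choose a * (k - a).choose j : ℝ) = k.choose j * (k - j).choose a := by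
          exact_mod_cast choose_mul_choose_sub_comm k a j
        rw [one_pow, mul_one, mul_pow]
        linear_combination (x ^ a * ((-1) ^ j / j !) * t ^ j * (1 + x) ^ j) * this
    _ = k.choose j * ((-1) ^ j / j !) * t ^ j * (1 + x) ^ k := by
        rw [← add_pow, add_comm x, mul_comm, mul_assoc, ← pow_add, Nat.add_sub_cancel' hj]

theorem stmt16_general (k : ℕ) (x : ℝ) (hx : x ≠ 0) :
    ∑ n ∈ Finset.range (k+1), x^(k-n) * L2 n (k-n) x (1/x) =
      Lag k 0 1 * (1 + x)^k := by
  calc ∑ n ∈ range (k + 1), x ^ (k - n) * L2 n (k - n) x (1 / x)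
      = ∑ n ∈ range (k + 1), ∑ a ∈ range (k - n + 1), k.choose a * x ^ a *
          ∑ s ∈ range (n + 1), (-1) ^ (k - a - n + s) / ((k - a - n)! * s ! : ℝ) *
            (k - a).choose (n - s) * x ^ s := by
        refine sum_congr rfl fun n hn ↦ ?_
        rw [pow_mul_L2_one_div hx, Nat.sub_add_cancel (mem_range_succ_iff.mp hn)]
        simp only [Nat.sub_right_comm k n]
    _ = ∑ a ∈ range (k + 1), k.choose a * x ^ a * Lag (k - a) 0 (1 * (1 + x)) := by
        simp_rw [one_mul, ← sum_sum_eq_Lag_one_add, mul_sum]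
        exact sum_comm' fun n a ↦ by simp only [mem_range]; omega
    _ = Lag k 0 1 * (1 + x) ^ k := sum_choose_mul_pow_mul_Lag k x 1

theorem stmt16 (k : ℕ) (hk : 1 ≤ k) (x : ℝ) (hx : x ≠ 0) :
    ∑ n ∈ Finset.range (k+1), x^(k-n) * L2 n (k-n) x (1/x) =
      Lag k 0 1 * (1 + x)^k :=
  stmt16_general k x hx
end

section
/- For every positive integer k and all nonzero real x, y, the identity ∑_{n+m=k} x^n · y^m · L_{n,m}(1/x, -1/y) = (x + y)^k holds, where the sum is over pairs (n,m) of nonnegative integers with n + m = k. -/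
open Finset

private lemma powdiv17 {z : ℝ} (hz : z ≠ 0) {a b : ℕ} (h : b ≤ a) :
    z^a * (1/z)^b = z^(a-b) := by
  have e : z^(a-b) * z^b = z^a := by rw [← pow_add, Nat.sub_add_cancel h]
  rw [← e, mul_assoc, one_div, inv_pow, mul_inv_cancel₀ (pow_ne_zero b hz), mul_one]

private lemma reindex17 (k : ℕ) (T : ℕ → ℕ → ℕ → ℝ) :
    ∑ n ∈ range (k+1), ∑ i ∈ range (k-n+1), ∑ s ∈ range (n+1), T n i s
      = ∑ a ∈ range (k+1), ∑ b ∈ range (k-a+1), ∑ t ∈ range (k-a-b+1),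
          T (a+t) (k-a-b-t) t := by
  rw [Finset.sum_sigma', Finset.sum_sigma']
  conv_rhs => rw [Finset.sum_sigma', Finset.sum_sigma']
  refine Finset.sum_nbij' (fun p ↦ ⟨⟨p.1.1 - p.2, k - p.1.1 - p.1.2⟩, p.2⟩)
    (fun q ↦ ⟨⟨q.1.1 + q.2, k - q.1.1 - q.1.2 - q.2⟩, q.2⟩) ?_ ?_ ?_ ?_ ?_
  · rintro ⟨⟨n,i⟩,s⟩ h
    simp only [mem_sigma, mem_range] at h ⊢
    omega
  · rintro ⟨⟨a,b⟩,t⟩ h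
    simp only [mem_sigma, mem_range] at h ⊢
    omega
  · rintro ⟨⟨n,i⟩,s⟩ h
    simp only [mem_sigma, mem_range] at h
    simp only [Sigma.mk.inj_iff, heq_eq_eq]
    exact ⟨⟨by omega, by omega⟩, trivial⟩
  · rintro ⟨⟨a,b⟩,t⟩ h
    simp only [mem_sigma, mem_range] at h
    simp only [Sigma.mk.inj_iff, heq_eq_eq]
    exact ⟨⟨by omega, by omega⟩, trivial⟩
  · rintro ⟨⟨n,i⟩,s⟩ h
    simp only [mem_sigma, mem_range] at h
    simp only []
    congr 1 <;> omega

private lemma alt17 (d : ℕ) :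
    ∑ s ∈ range (d+1), (-1:ℝ)^s / ((d-s).factorial * s.factorial)
      = if d = 0 then 1 else 0 := by
  have h1 : ∀ s ∈ range (d+1), (-1:ℝ)^s / ((d-s).factorial * s.factorial)
      = ((-1)^s * d.choose s) / d.factorial := by
    intro s hs
    have hsd : s ≤ d := Nat.lt_succ_iff.mp (Finset.mem_range.mp hs)
    have hc := Nat.choose_mul_factorial_mul_factorial hsd
    have hfe : (d.factorial : ℝ) = (d.choose s) * s.factorial * (d-s).factorial := by
      exact_mod_cast hc.symm
    rw [div_eq_div_iff (by positivity) (by positivity), hfe]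
    ring
  rw [Finset.sum_congr rfl h1, ← Finset.sum_div]
  have h2 : ∑ s ∈ range (d+1), ((-1:ℝ)^s * d.choose s) = if d = 0 then 1 else 0 := by
    have h := Int.alternating_sum_range_choose (n := d)
    have h' := congrArg (fun z : ℤ => (z : ℝ)) h
    push_cast at h'
    convert h' using 1
  rw [h2]
  split_ifs with h <;> simp [h, Nat.factorial_ne_zero]

theorem stmt17 (k : ℕ) (hk : 1 ≤ k) (x y : ℝ) (hx : x ≠ 0) (hy : y ≠ 0) :
    ∑ n ∈ Finset.range (k+1), x^n * y^(k-n) * L2 n (k-n) (1/x) (-1/y) =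
      (x + y)^k := by
  set T : ℕ → ℕ → ℕ → ℝ := fun n i s =>
    (-1:ℝ)^s / ((Nat.factorial i) * (Nat.factorial s)) *
      (k.choose (k-n-i)) * ((n+i).choose (n-s)) * x^(n-s) * y^(k-n-i) with hT
  have stepA : ∀ n ∈ range (k+1), x^n * y^(k-n) * L2 n (k-n) (1/x) (-1/y)
      = ∑ i ∈ range (k-n+1), ∑ s ∈ range (n+1), T n i s := by
    intro n hn
    have hn' : n ≤ k := Nat.lt_succ_iff.mp (Finset.mem_range.mp hn)
    unfold L2
    rw [Finset.mul_sum]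
    refine Finset.sum_congr rfl fun i hi => ?_
    have hi' : i ≤ k - n := Nat.lt_succ_iff.mp (Finset.mem_range.mp hi)
    rw [Finset.mul_sum]
    refine Finset.sum_congr rfl fun s hs => ?_
    have hs' : s ≤ n := Nat.lt_succ_iff.mp (Finset.mem_range.mp hs)
    have hkn : k - n + n = k := by omega
    rw [hkn, hT]
    have ex : x^n * (1/x)^s = x^(n-s) := powdiv17 hx hs'
    have ey : y^(k-n) * (1/y)^i = y^(k-n-i) := powdiv17 hy hi'
    have esign : (-1:ℝ)^(i+s) * (-1)^i = (-1)^s := by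
      rw [← pow_add, show i+s+i = 2*i+s from by ring, pow_add, pow_mul]
      norm_num
    simp only []
    rw [← ex, ← ey, ← esign, neg_div, neg_pow]
    ring
  rw [Finset.sum_congr rfl stepA, reindex17 k T]
  have stepC : ∀ a ∈ range (k+1), ∀ b ∈ range (k-a+1),
      ∑ t ∈ range (k-a-b+1), T (a+t) (k-a-b-t) t
        = (if k-a-b = 0 then (1:ℝ) else 0) *
            ((k.choose b) * ((k-b).choose a) * x^a * y^b) := by
    intro a ha b hb
    have ha' : a ≤ k := Nat.lt_succ_iff.mp (Finset.mem_range.mp ha)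
    have hb' : b ≤ k - a := Nat.lt_succ_iff.mp (Finset.mem_range.mp hb)
    have h1 : ∀ t ∈ range (k-a-b+1), T (a+t) (k-a-b-t) t
        = ((-1:ℝ)^t / ((k-a-b-t).factorial * t.factorial)) *
            ((k.choose b) * ((k-b).choose a) * x^a * y^b) := by
      intro t ht
      have ht' : t ≤ k - a - b := Nat.lt_succ_iff.mp (Finset.mem_range.mp ht)
      rw [hT]
      simp only []
      rw [show k-(a+t)-(k-a-b-t) = b from by omega,
        show (a+t)+(k-a-b-t) = k-b from by omega,
        show (a+t)-t = a from by omega]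
      ring
    rw [Finset.sum_congr rfl h1, ← Finset.sum_mul, alt17 (k-a-b)]
  rw [Finset.sum_congr rfl (fun a ha => Finset.sum_congr rfl (stepC a ha))]
  have stepD : ∀ a ∈ range (k+1),
      ∑ b ∈ range (k-a+1), (if k-a-b = 0 then (1:ℝ) else 0) *
          ((k.choose b) * ((k-b).choose a) * x^a * y^b)
        = x^a * y^(k-a) * (k.choose a) := by
    intro a ha
    have ha' : a ≤ k := Nat.lt_succ_iff.mp (Finset.mem_range.mp ha)
    rw [Finset.sum_eq_single_of_mem (k-a) (Finset.mem_range.mpr (by omega))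
      (fun b hb hne => by
        rw [if_neg (by
          have := Nat.lt_succ_iff.mp (Finset.mem_range.mp hb); omega), zero_mul])]
    rw [if_pos (by omega), show k-(k-a) = a from by omega, Nat.choose_self,
      Nat.choose_symm ha']
    push_cast
    ring
  rw [Finset.sum_congr rfl stepD, add_pow]
end
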